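/- arXiv:2203.13473 — 2 statements merged into one kernel-verified Lean document; each statement's English description precedes it below -/
import Mathlib

section
/- Let d = 3 or d = 4, and define Z := ((d-2)/2)(1+|x|²/(d(d-2)))^{-d/2} - (|x|²/(2d))[(1+|x|²/(d(d-2)))^{-d/2} - (|x|²/(d(d-2)))^{-d/2}]. Then Z ∈ L^{2d/(d+2)}(ℝ^d), i.e., ‖Z‖_{L^{2d/(d+2)}} < ∞. -/
/-!
Write `a = d/2`, `c = d(d-2)` and `u = |x|²/c`. Since `|x|²/(2d) = ((d-2)/2) u`, the function
`Z` is `(d-2)/2` times `g(u) = (1+u)^(-a) + u (u^(-a) - (1+u)^(-a))`, which is nonnegative,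
at most `2 u^(1-a)` (the crude bound near the origin), and at most `(1+a) u^(-a)` since
Bernoulli's inequality gives `u^(-a) - (1+u)^(-a) ≤ a u^(-a)/(1+u)`. Hence `|Z| ≲ |x|^(2-d)`
near `0` and `|Z| ≲ |x|^(-d)` near infinity, and with `p = 2d/(d+2)` both `|x|^(-(d-2)p)` on
the unit ball and `|x|^(-dp)` outside it are integrable exactly when `2 < d < 6`.
-/

open MeasureTheory Metric Set
open scoped ENNReal

namespace Real

lemma rpow_le_abs_rpow_mul_rpow_neg {a b C α p : ℝ} (ha : 0 ≤ a) (hb : 0 ≤ b) (hp : 0 ≤ p)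
    (h : a ≤ C * b ^ (-α)) : a ^ p ≤ |C| ^ p * b ^ (-(α * p)) := by
  have hb' : 0 ≤ b ^ (-α) := rpow_nonneg hb _
  calc a ^ p ≤ (|C| * b ^ (-α)) ^ p :=
        rpow_le_rpow ha (h.trans (by gcongr; exact le_abs_self C)) hp
    _ = |C| ^ p * b ^ (-(α * p)) := by
        rw [mul_rpow (abs_nonneg C) hb', ← rpow_mul hb, neg_mul]

lemma rpow_neg_le_mul_one_add_rpow_neg {r t β : ℝ} (hr : 0 < r) (ht : r ≤ t) (hβ : 0 ≤ β) :
    t ^ (-β) ≤ (1 + r⁻¹) ^ β * (1 + t) ^ (-β) := by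
  have ht0 : 0 < t := hr.trans_le ht
  have hle : (1 + t) / (1 + r⁻¹) ≤ t := by
    rw [div_le_iff₀ (by positivity), mul_add, mul_one]
    have : 1 ≤ t * r⁻¹ := by rw [le_mul_inv_iff₀ hr, one_mul]; exact ht
    linarith
  calc t ^ (-β) ≤ ((1 + t) / (1 + r⁻¹)) ^ (-β) :=
        rpow_le_rpow_of_nonpos (by positivity) hle (neg_nonpos.2 hβ)
    _ = (1 + r⁻¹) ^ β * (1 + t) ^ (-β) := by
        rw [div_rpow (by positivity) (by positivity), rpow_neg (x := 1 + r⁻¹) (by positivity) β,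
          div_inv_eq_mul, mul_comm]

lemma rpow_neg_sub_one_add_rpow_neg_le {a u : ℝ} (ha : 1 ≤ a) (hu : 0 < u) :
    u ^ (-a) - (1 + u) ^ (-a) ≤ a * u ^ (-a) / (1 + u) := by
  have hu1 : 0 < 1 + u := by linarith
  have bernoulli : 1 + a * (-(1 + u)⁻¹) ≤ (u / (1 + u)) ^ a := by
    have h := one_add_mul_self_le_rpow_one_add
      (neg_le_neg (inv_le_one_of_one_le₀ (by linarith : (1 : ℝ) ≤ 1 + u))) ha
    rwa [show 1 + -(1 + u)⁻¹ = u / (1 + u) by field_simp; ring] at h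
  have hsplit : (u / (1 + u)) ^ a * u ^ (-a) = (1 + u) ^ (-a) := by
    rw [div_rpow hu.le hu1.le, rpow_neg hu.le, rpow_neg hu1.le]
    field_simp
  have hua : 0 ≤ u ^ (-a) := rpow_nonneg hu.le _
  calc u ^ (-a) - (1 + u) ^ (-a) = (1 - (u / (1 + u)) ^ a) * u ^ (-a) := by
        rw [sub_mul, one_mul, hsplit]
    _ ≤ (a * (1 + u)⁻¹) * u ^ (-a) := by gcongr; linarith
    _ = a * u ^ (-a) / (1 + u) := by ring

lemma one_add_rpow_neg_le_rpow_neg {a u : ℝ} (ha : 0 ≤ a) (hu : 0 < u) :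
    (1 + u) ^ (-a) ≤ u ^ (-a) :=
  rpow_le_rpow_of_nonpos hu (by linarith) (neg_nonpos.2 ha)

lemma sq_div_rpow_neg {r c : ℝ} (hr : 0 ≤ r) (hc : 0 ≤ c) (e : ℝ) :
    (r ^ 2 / c) ^ (-e) = c ^ e * r ^ (-(2 * e)) := by
  rw [div_rpow (by positivity) hc, rpow_neg hc, div_inv_eq_mul, mul_comm,
    ← rpow_natCast_mul hr]
  push_cast
  ring_nf

end Real

namespace MeasureTheory

variable {E F : Type*} [NormedAddCommGroup E] [NormedSpace ℝ E] [FiniteDimensional ℝ E]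
  [MeasurableSpace E] [BorelSpace E] [NormedAddCommGroup F] {μ : Measure E} [μ.IsAddHaarMeasure]

lemma integrableOn_compl_ball_of_norm_le_rpow {f : E → F} {C β r : ℝ} (hr : 0 < r)
    (hβ : Module.finrank ℝ E < β)
    (h_decay : ∀ᵐ x ∂μ.restrict (ball 0 r)ᶜ, ‖f x‖ ≤ C * ‖x‖ ^ (-β))
    (h_meas : AEStronglyMeasurable f μ) :
    IntegrableOn f (ball 0 r)ᶜ μ := by
  have hβ0 : 0 ≤ β := (Nat.cast_nonneg _).trans hβ.le
  refine (((integrable_one_add_norm hβ).const_mul (|C| * (1 + r⁻¹) ^ β)).integrableOn).mono'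
    h_meas.restrict ?_
  filter_upwards [h_decay, ae_restrict_mem measurableSet_ball.compl] with x hx hxr
  have hrx : r ≤ ‖x‖ := by simpa using hxr
  calc ‖f x‖ ≤ |C| * ‖x‖ ^ (-β) := hx.trans (by gcongr; exact le_abs_self C)
    _ ≤ |C| * ((1 + r⁻¹) ^ β * (1 + ‖x‖) ^ (-β)) := by
        gcongr; exact Real.rpow_neg_le_mul_one_add_rpow_neg hr hrx hβ0
    _ = |C| * (1 + r⁻¹) ^ β * (1 + ‖x‖) ^ (-β) := by ring

lemma memLp_of_norm_le_rpow_of_norm_le_rpow {f : E → F} {p α β C₀ C₁ : ℝ}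
    (hE : 1 ≤ Module.finrank ℝ E) (hp : 0 < p)
    (hα : α * p < Module.finrank ℝ E) (hβ : Module.finrank ℝ E < β * p)
    (h_zero : ∀ᵐ x ∂μ, ‖f x‖ ≤ C₀ * ‖x‖ ^ (-α))
    (h_infty : ∀ᵐ x ∂μ, ‖f x‖ ≤ C₁ * ‖x‖ ^ (-β))
    (h_meas : AEStronglyMeasurable f μ) :
    MemLp f (ENNReal.ofReal p) μ := by
  have h_meas_pow : AEStronglyMeasurable (fun x ↦ ‖f x‖ ^ p) μ :=
    (h_meas.norm.aemeasurable.pow_const p).aestronglyMeasurable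
  have h_pow_le {C γ : ℝ} (h : ∀ᵐ x ∂μ, ‖f x‖ ≤ C * ‖x‖ ^ (-γ)) :
      ∀ᵐ x ∂μ, ‖‖f x‖ ^ p‖ ≤ |C| ^ p * ‖x‖ ^ (-(γ * p)) := by
    filter_upwards [h] with x hx
    rw [Real.norm_of_nonneg (Real.rpow_nonneg (norm_nonneg _) _)]
    exact Real.rpow_le_abs_rpow_mul_rpow_neg (norm_nonneg _) (norm_nonneg _) hp.le hx
  rw [← integrable_norm_rpow_iff h_meas (by simpa using hp) ENNReal.ofReal_ne_top,
    ENNReal.toReal_ofReal hp.le, ← integrableOn_univ, ← union_compl_self (ball (0 : E) 1)]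
  exact (integrableOn_ball_of_norm_le_rpow hE hα (ae_restrict_of_ae (h_pow_le h_zero))
    h_meas_pow).union (integrableOn_compl_ball_of_norm_le_rpow one_pos hβ
      (ae_restrict_of_ae (h_pow_le h_infty)) h_meas_pow)

end MeasureTheory

noncomputable def regularProfile (a u : ℝ) : ℝ :=
  (1 + u) ^ (-a) + u * (u ^ (-a) - (1 + u) ^ (-a))

section regularProfile

variable {a u : ℝ}

lemma regularProfile_nonneg (ha : 0 ≤ a) (hu : 0 < u) : 0 ≤ regularProfile a u := by
  have h_le := Real.one_add_rpow_neg_le_rpow_neg ha hu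
  have h_first : 0 ≤ (1 + u) ^ (-a) := Real.rpow_nonneg (by linarith) _
  have h_second : 0 ≤ u * (u ^ (-a) - (1 + u) ^ (-a)) := mul_nonneg hu.le (by linarith)
  unfold regularProfile
  linarith

lemma regularProfile_le_two_mul_rpow (ha : 1 ≤ a) (hu : 0 < u) :
    regularProfile a u ≤ 2 * u ^ (-(a - 1)) := by
  have hu_mul : u * u ^ (-a) = u ^ (-(a - 1)) := by
    rw [neg_sub, sub_eq_add_neg, Real.rpow_add hu, Real.rpow_one]
  have h_first : (1 + u) ^ (-a) ≤ u ^ (-(a - 1)) :=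
    calc (1 + u) ^ (-a) ≤ (1 + u) ^ (-(a - 1)) :=
          Real.rpow_le_rpow_of_exponent_le (by linarith) (by linarith)
      _ ≤ u ^ (-(a - 1)) := Real.rpow_le_rpow_of_nonpos hu (by linarith) (by linarith)
  have h_second : u * (u ^ (-a) - (1 + u) ^ (-a)) ≤ u ^ (-(a - 1)) := by
    rw [← hu_mul]
    have : 0 ≤ (1 + u) ^ (-a) := Real.rpow_nonneg (by linarith) _
    gcongr
    linarith
  unfold regularProfile
  linarith

lemma regularProfile_le_mul_rpow_neg (ha : 1 ≤ a) (hu : 0 < u) :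
    regularProfile a u ≤ (1 + a) * u ^ (-a) := by
  have h_second : u * (u ^ (-a) - (1 + u) ^ (-a)) ≤ a * u ^ (-a) :=
    calc u * (u ^ (-a) - (1 + u) ^ (-a)) ≤ u * (a * u ^ (-a) / (1 + u)) := by
          gcongr; exact Real.rpow_neg_sub_one_add_rpow_neg_le ha hu
      _ ≤ a * u ^ (-a) := by
          rw [mul_div_assoc', div_le_iff₀ (by linarith)]
          have : 0 ≤ a * u ^ (-a) := mul_nonneg (by linarith) (Real.rpow_nonneg hu.le _)
          nlinarith
  have h_first := Real.one_add_rpow_neg_le_rpow_neg (a := a) (by linarith) hu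
  unfold regularProfile
  linarith

end regularProfile

noncomputable def regularPart (d r : ℝ) : ℝ :=
  ((d - 2) / 2) * (1 + r ^ 2 / (d * (d - 2))) ^ (-d / 2) -
    (r ^ 2 / (2 * d)) *
      ((1 + r ^ 2 / (d * (d - 2))) ^ (-d / 2) - (r ^ 2 / (d * (d - 2))) ^ (-d / 2))

section regularPart

variable {d r : ℝ}

lemma regularPart_eq_mul_regularProfile (hd : 2 < d) :
    regularPart d r = ((d - 2) / 2) * regularProfile (d / 2) (r ^ 2 / (d * (d - 2))) := by
  have hd0 : d ≠ 0 := by linarith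
  have hd2 : d - 2 ≠ 0 := by linarith
  unfold regularPart regularProfile
  rw [neg_div]
  field_simp
  ring

lemma abs_regularPart_le_rpow_neg_sub_two (hd : 2 < d) (hr : 0 < r) :
    |regularPart d r| ≤ (d - 2) * (d * (d - 2)) ^ (d / 2 - 1) * r ^ (-(d - 2)) := by
  have hc : 0 < d * (d - 2) := by nlinarith
  have hu : 0 < r ^ 2 / (d * (d - 2)) := by positivity
  rw [regularPart_eq_mul_regularProfile hd, abs_of_nonneg
    (mul_nonneg (by linarith) (regularProfile_nonneg (by linarith) hu))]
  calc (d - 2) / 2 * regularProfile (d / 2) (r ^ 2 / (d * (d - 2)))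
      ≤ (d - 2) / 2 * (2 * (r ^ 2 / (d * (d - 2))) ^ (-(d / 2 - 1))) := by
        gcongr; exact regularProfile_le_two_mul_rpow (by linarith) hu
    _ = (d - 2) * (d * (d - 2)) ^ (d / 2 - 1) * r ^ (-(d - 2)) := by
        rw [Real.sq_div_rpow_neg hr.le hc.le, show 2 * (d / 2 - 1) = d - 2 by ring]
        ring

lemma abs_regularPart_le_rpow_neg (hd : 2 < d) (hr : 0 < r) :
    |regularPart d r| ≤ (d - 2) / 2 * (1 + d / 2) * (d * (d - 2)) ^ (d / 2) * r ^ (-d) := by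
  have hc : 0 < d * (d - 2) := by nlinarith
  have hu : 0 < r ^ 2 / (d * (d - 2)) := by positivity
  rw [regularPart_eq_mul_regularProfile hd, abs_of_nonneg
    (mul_nonneg (by linarith) (regularProfile_nonneg (by linarith) hu))]
  calc (d - 2) / 2 * regularProfile (d / 2) (r ^ 2 / (d * (d - 2)))
      ≤ (d - 2) / 2 * ((1 + d / 2) * (r ^ 2 / (d * (d - 2))) ^ (-(d / 2))) := by
        gcongr; exact regularProfile_le_mul_rpow_neg (by linarith) hu
    _ = (d - 2) / 2 * (1 + d / 2) * (d * (d - 2)) ^ (d / 2) * r ^ (-d) := by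
        rw [Real.sq_div_rpow_neg hr.le hc.le, show 2 * (d / 2) = d by ring]
        ring

end regularPart

/-- For `d = 3, 4`, the regular part `Z` of the decomposition
`ΛW = -({d(d-2)}^{d/2}/(2d))|x|^{-(d-2)} + Z` belongs to `L^{2d/(d+2)}(ℝ^d)`. -/
theorem regular_part_memLp (d : ℕ) (hd : d = 3 ∨ d = 4)
    (Z : EuclideanSpace ℝ (Fin d) → ℝ)
    (hZ : ∀ x, Z x =
      (((d : ℝ) - 2) / 2) * (1 + ‖x‖ ^ 2 / ((d : ℝ) * ((d : ℝ) - 2))) ^ (-(d : ℝ) / 2) -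
        (‖x‖ ^ 2 / (2 * (d : ℝ))) *
          ((1 + ‖x‖ ^ 2 / ((d : ℝ) * ((d : ℝ) - 2))) ^ (-(d : ℝ) / 2) -
            (‖x‖ ^ 2 / ((d : ℝ) * ((d : ℝ) - 2))) ^ (-(d : ℝ) / 2))) :
    MemLp Z (ENNReal.ofReal (2 * (d : ℝ) / ((d : ℝ) + 2))) volume := by
  obtain ⟨hd3, hd6⟩ : 3 ≤ (d : ℝ) ∧ (d : ℝ) < 6 := by
    rcases hd with rfl | rfl <;> norm_num
  have : Nontrivial (EuclideanSpace ℝ (Fin d)) :=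
    Module.nontrivial_of_finrank_pos (R := ℝ) (by rw [finrank_euclideanSpace_fin]; omega)
  have h_norm_pos : ∀ᵐ x ∂(volume : Measure (EuclideanSpace ℝ (Fin d))), 0 < ‖x‖ := by
    filter_upwards [compl_mem_ae_iff.2 (measure_singleton 0)] with x hx
    exact norm_pos_iff.2 hx
  rw [show Z = fun x ↦ regularPart d ‖x‖ from funext hZ]
  have h_meas : Measurable fun x : EuclideanSpace ℝ (Fin d) ↦ regularPart d ‖x‖ := by
    unfold regularPart; fun_prop
  refine memLp_of_norm_le_rpow_of_norm_le_rpow (α := d - 2) (β := d) ?_ (by positivity) ?_ ?_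
    (h_norm_pos.mono fun x hx ↦ abs_regularPart_le_rpow_neg_sub_two (by linarith) hx)
    (h_norm_pos.mono fun x hx ↦ abs_regularPart_le_rpow_neg (by linarith) hx)
    h_meas.aestronglyMeasurable <;> rw [finrank_euclideanSpace_fin]
  · omega
  · rw [mul_div_assoc', div_lt_iff₀ (by positivity)]; nlinarith
  · rw [mul_div_assoc', lt_div_iff₀ (by positivity)]; nlinarith
end

section
/- Let H be a real Hilbert space, S : H → ℝ a C² functional, Φ ∈ H with S'(Φ) = 0, and N(u) := S'(u)u the Nehari functional (assumed C¹). Suppose Φ minimizes S over {u ≠ 0 : N(u) = 0}, that N'(Φ)Φ < 0, and let B(u,v) := [S''(Φ)u]v. Then for every f ∈ H with N'(Φ)f = 0 one has B(f,f) ≥ 0. -/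
/-!
Solving `N((1 + t)(Φ + a f)) = 0` for `t = h(a)` by the implicit function theorem (possible as
`N'(Φ)Φ ≠ 0`) gives a curve `u(a)` on the Nehari manifold through `Φ`, with `h'(0) = 0` because
`N'(Φ)f = 0`. Along it `S'(u)u = 0` kills the term containing `h'`, so
`(S ∘ u)'(a) = (1 + h(a)) S'(u(a)) f` and `(S ∘ u)''(0) = S''(Φ)(f, f)`. This is nonnegative
because `S ∘ u` has a local minimum at `0`.
-/

open Filter Topology

theorem IsLocalMin.deriv_deriv_nonneg {f : ℝ → ℝ} {x₀ : ℝ} (hmin : IsLocalMin f x₀)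
    (hc : ContinuousAt f x₀) : 0 ≤ deriv (deriv f) x₀ := by
  by_contra! hneg
  have hmax : IsLocalMax f x₀ := isLocalMax_of_deriv_deriv_neg hneg hmin.deriv_eq_zero hc
  have hconst : f =ᶠ[𝓝 x₀] fun _ => f x₀ :=
    (hmin.and hmax).mono fun x hx => le_antisymm hx.2 hx.1
  have hderiv : deriv f =ᶠ[𝓝 x₀] fun _ => 0 :=
    hconst.eventually_nhds.mono fun x (hx : f =ᶠ[𝓝 x] _) => by rw [hx.deriv_eq, deriv_const]
  rw [hderiv.deriv_eq, deriv_const] at hneg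
  exact lt_irrefl 0 hneg

theorem ContinuousLinearMap.isInvertible_of_apply_one_ne_zero {𝕜 : Type*} [NormedField 𝕜]
    {L : 𝕜 →L[𝕜] 𝕜} (hL : L 1 ≠ 0) : L.IsInvertible := by
  have hL' (x : 𝕜) : L x = x * L 1 := by rw [← smul_eq_mul, ← map_smul, smul_eq_mul, mul_one]
  refine .of_inverse (g := (L 1)⁻¹ • .id 𝕜 𝕜) (ext_ring ?_) (ext_ring ?_)
  · simp only [comp_apply, smul_apply, id_apply, smul_eq_mul, mul_one]
    rw [hL', inv_mul_cancel₀ hL]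
  · simp only [comp_apply, smul_apply, id_apply, smul_eq_mul]
    exact inv_mul_cancel₀ hL

theorem DifferentiableAt.hasDerivAt_comp_smul_of_fderiv_apply_self_eq_zero {𝕜 E : Type*}
    [NontriviallyNormedField 𝕜] [NormedAddCommGroup E] [NormedSpace 𝕜 E]
    {S : E → 𝕜} {c : 𝕜 → 𝕜} {v : 𝕜 → E} {c' : 𝕜} {v' : E} {a : 𝕜}
    (hS : DifferentiableAt 𝕜 S (c a • v a)) (hc : HasDerivAt c c' a) (hv : HasDerivAt v v' a)
    (hca : c a ≠ 0) (hself : fderiv 𝕜 S (c a • v a) (c a • v a) = 0) :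
    HasDerivAt (fun x => S (c x • v x)) (c a * fderiv 𝕜 S (c a • v a) v') a := by
  have hv_ker : fderiv 𝕜 S (c a • v a) (v a) = 0 := by
    rw [map_smul, smul_eq_zero] at hself
    exact hself.resolve_left hca
  refine (hS.hasFDerivAt.comp_hasDerivAt a (hc.smul hv)).congr_deriv ?_
  simp [hv_ker]

theorem ContDiffAt.exists_implicit_of_fderiv_inr_ne_zero {𝕜 : Type*} [RCLike 𝕜]
    {G : 𝕜 × 𝕜 → 𝕜} {p : 𝕜 × 𝕜} (hG : ContDiffAt 𝕜 1 G p) (h₂ : fderiv 𝕜 G p (0, 1) ≠ 0) :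
    ∃ h : 𝕜 → 𝕜, h p.1 = p.2 ∧ HasDerivAt h (-fderiv 𝕜 G p (1, 0) / fderiv 𝕜 G p (0, 1)) p.1 ∧
      (∀ᶠ a in 𝓝 p.1, DifferentiableAt 𝕜 h a) ∧ ∀ᶠ a in 𝓝 p.1, G (a, h a) = G p := by
  have hinv : (fderiv 𝕜 G p ∘L .inr 𝕜 𝕜 𝕜).IsInvertible :=
    ContinuousLinearMap.isInvertible_of_apply_one_ne_zero h₂
  refine ⟨hG.implicitFunction one_ne_zero hinv, hG.implicitFunction_apply_self _ _, ?_,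
    ?_, hG.eventually_apply_implicitFunction _ _⟩
  · refine (hG.hasStrictFDerivAt_implicitFunction one_ne_zero hinv).hasStrictDerivAt.hasDerivAt
      |>.congr_deriv ?_
    have hinv_apply : (fderiv 𝕜 G p ∘L .inr 𝕜 𝕜 𝕜).inverse (fderiv 𝕜 G p (1, 0)) =
        fderiv 𝕜 G p (1, 0) / fderiv 𝕜 G p (0, 1) := by
      rw [hinv.inverse_apply_eq, ContinuousLinearMap.comp_apply, ContinuousLinearMap.inr_apply,
        ← mul_one (_ / _), ← smul_eq_mul, ← Prod.smul_zero_mk, map_smul, smul_eq_mul,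
        div_mul_cancel₀ _ h₂]
    simp [hinv_apply, neg_div]
  · exact ((hG.contDiffAt_implicitFunction one_ne_zero hinv).eventually (by simp)).mono
      fun a ha => ha.differentiableAt one_ne_zero

theorem exists_rescaled_line_in_zero_set {𝕜 E : Type*} [RCLike 𝕜] [NormedAddCommGroup E]
    [NormedSpace 𝕜 E] {N : E → 𝕜} {Φ f : E} (hN : ContDiffAt 𝕜 1 N Φ) (hNΦ : N Φ = 0)
    (hΦ : fderiv 𝕜 N Φ Φ ≠ 0) (hf : fderiv 𝕜 N Φ f = 0) :
    ∃ h : 𝕜 → 𝕜, h 0 = 0 ∧ HasDerivAt h 0 0 ∧ (∀ᶠ a in 𝓝 0, DifferentiableAt 𝕜 h a) ∧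
      ∀ᶠ a in 𝓝 0, N ((1 + h a) • (Φ + a • f)) = 0 := by
  set rescale : 𝕜 × 𝕜 → E := fun p => (1 + p.2) • (Φ + p.1 • f)
  have hrescale0 : rescale 0 = Φ := by simp [rescale]
  have hrescale : HasFDerivAt rescale ((ContinuousLinearMap.fst 𝕜 𝕜 𝕜).smulRight f +
      (ContinuousLinearMap.snd 𝕜 𝕜 𝕜).smulRight Φ) 0 := by
    have hscale : HasFDerivAt (fun p : 𝕜 × 𝕜 => 1 + p.2) (ContinuousLinearMap.snd 𝕜 𝕜 𝕜) 0 :=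
      hasFDerivAt_snd.const_add 1
    have hshift : HasFDerivAt (fun p : 𝕜 × 𝕜 => Φ + p.1 • f)
        ((ContinuousLinearMap.fst 𝕜 𝕜 𝕜).smulRight f) 0 :=
      (hasFDerivAt_fst.smul_const f).const_add Φ
    refine (hscale.smul hshift).congr_fderiv ?_
    ext <;> simp
  rw [← hrescale0] at hN
  have hNrescale : ContDiffAt 𝕜 1 (N ∘ rescale) 0 := hN.comp 0 (by fun_prop)
  have hderiv := ((hN.differentiableAt one_ne_zero).hasFDerivAt.comp 0 hrescale).fderiv
  rw [hrescale0] at hderiv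
  obtain ⟨h, h0, hh', hdiff, hzero⟩ :=
    hNrescale.exists_implicit_of_fderiv_inr_ne_zero (by simpa [hderiv] using hΦ)
  refine ⟨h, by simpa using h0, by simpa [hderiv, hf] using hh', by simpa using hdiff, ?_⟩
  simpa [rescale, hNΦ] using hzero

theorem hasDerivAt_deriv_comp_rescaled_line {𝕜 E : Type*} [NontriviallyNormedField 𝕜]
    [NormedAddCommGroup E] [NormedSpace 𝕜 E] {S : E → 𝕜} (hS : ContDiff 𝕜 2 S) {Φ f : E}
    {h : 𝕜 → 𝕜} (h0 : h 0 = 0) (hh' : HasDerivAt h 0 0)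
    (hdiff : ∀ᶠ a in 𝓝 0, DifferentiableAt 𝕜 h a)
    (hself : ∀ᶠ a in 𝓝 0,
      fderiv 𝕜 S ((1 + h a) • (Φ + a • f)) ((1 + h a) • (Φ + a • f)) = 0) :
    HasDerivAt (deriv fun a => S ((1 + h a) • (Φ + a • f))) (fderiv 𝕜 (fderiv 𝕜 S) Φ f f) 0 := by
  set u : 𝕜 → E := fun a => (1 + h a) • (Φ + a • f)
  have hS' : ContDiff 𝕜 1 (fderiv 𝕜 S) := hS.fderiv_right one_add_one_eq_two.le
  have hline (a : 𝕜) : HasDerivAt (fun a : 𝕜 => Φ + a • f) f a := by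
    simpa using ((hasDerivAt_id a).smul_const f).const_add Φ
  have hu0 : u 0 = Φ := by simp [u, h0]
  have hu : HasDerivAt u f 0 := ((hh'.const_add 1).smul (hline 0)).congr_deriv (by simp [h0])
  have hscale : ∀ᶠ a in 𝓝 0, 1 + h a ≠ 0 :=
    (hh'.continuousAt.const_add 1).eventually_ne (by simp [h0])
  -- On the zero set of `u ↦ S'(u) u`, the term coming from `h'` drops out of `(S ∘ u)'`.
  have hderiv : ∀ᶠ a in 𝓝 0, HasDerivAt (fun a => S (u a)) ((1 + h a) * fderiv 𝕜 S (u a) f) a := by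
    filter_upwards [hdiff, hself, hscale] with a hda hsa hca
    exact (hS.differentiable (by norm_num) _).hasDerivAt_comp_smul_of_fderiv_apply_self_eq_zero
      (hda.hasDerivAt.const_add 1) (hline a) hca hsa
  have hS'u : HasDerivAt (fun a => fderiv 𝕜 S (u a)) (fderiv 𝕜 (fderiv 𝕜 S) Φ f) 0 := by
    have := (hS'.differentiable one_ne_zero (u 0)).hasFDerivAt.comp_hasDerivAt 0 hu
    rwa [hu0] at this
  refine HasDerivAt.congr_of_eventuallyEq ?_ (hderiv.mono fun a ha => ha.deriv)
  exact ((hh'.const_add 1).mul (hS'u.clm_apply (hasDerivAt_const 0 f))).congr_deriv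
    (by simp [h0])

theorem second_variation_nonneg_on_nehari_general
    {H : Type*} [NormedAddCommGroup H] [InnerProductSpace ℝ H]
    (S : H → ℝ) (hS : ContDiff ℝ 2 S)
    (N : H → ℝ) (hN : ∀ u, N u = fderiv ℝ S u u)
    (Φ : H) (hΦne : Φ ≠ 0)
    (hΦNehari : N Φ = 0)
    (hmin : ∀ u : H, u ≠ 0 → N u = 0 → S Φ ≤ S u)
    (hneg : fderiv ℝ N Φ Φ < 0) :
    ∀ f : H, fderiv ℝ N Φ f = 0 → (0 : ℝ) ≤ fderiv ℝ (fderiv ℝ S) Φ f f := by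
  intro f hf
  have hNC : ContDiff ℝ 1 N := by
    rw [funext hN]
    exact (hS.fderiv_right one_add_one_eq_two.le).clm_apply contDiff_id
  obtain ⟨h, h0, hh', hdiff, hzero⟩ :=
    exists_rescaled_line_in_zero_set hNC.contDiffAt hΦNehari hneg.ne hf
  set u : ℝ → H := fun a => (1 + h a) • (Φ + a • f)
  have hu : ContinuousAt u 0 := (hh'.continuousAt.const_add 1).smul (by fun_prop)
  have hlocmin : IsLocalMin (fun a => S (u a)) 0 := by
    filter_upwards [hzero, hu.eventually_ne (by simpa [u, h0] using hΦne)] with a hNa hua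
    simpa [u, h0] using hmin (u a) hua hNa
  have hsecond := hasDerivAt_deriv_comp_rescaled_line hS h0 hh' hdiff
    (hzero.mono fun a ha => hN _ ▸ ha)
  exact hsecond.deriv ▸ hlocmin.deriv_deriv_nonneg (hS.continuous.continuousAt.comp hu)

/-- Abstract nonnegativity of the second variation on the Nehari manifold:
if `Φ` is a critical point of a `C²` functional `S` on a real Hilbert space which
minimizes `S` over the Nehari manifold `{u ≠ 0 : N(u) = 0}` (where `N(u) = S'(u)u`),
and `N'(Φ)Φ < 0`, then `B(f,f) = [S''(Φ)f]f ≥ 0` for every `f` with `N'(Φ)f = 0`. -/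
theorem second_variation_nonneg_on_nehari
    {H : Type*} [NormedAddCommGroup H] [InnerProductSpace ℝ H] [CompleteSpace H]
    (S : H → ℝ) (hS : ContDiff ℝ 2 S)
    (N : H → ℝ) (hN : ∀ u, N u = fderiv ℝ S u u)
    (Φ : H) (hΦne : Φ ≠ 0)
    (hΦNehari : N Φ = 0)
    (hcrit : fderiv ℝ S Φ = 0)
    (hmin : ∀ u : H, u ≠ 0 → N u = 0 → S Φ ≤ S u)
    (hNdiff : Differentiable ℝ N)
    (hneg : fderiv ℝ N Φ Φ < 0) :
    ∀ f : H, fderiv ℝ N Φ f = 0 → (0 : ℝ) ≤ fderiv ℝ (fderiv ℝ S) Φ f f :=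
  second_variation_nonneg_on_nehari_general S hS N hN Φ hΦne hΦNehari hmin hneg
end
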